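/- The Choi operator of the map X ↦ A_n X A_n†, namely (id ⊗ Ad_{A_n})(|Φ⟩⟨Φ|^{⊗n}), equals d!/(n!(d-n)!) times the rank-one projector onto the totally antisymmetric vector |∧_{1,...,d}⟩ of H^{⊗d}; in particular it is invariant under conjugation by U^{⊗d} for every unitary U on H. -/
import Mathlib

open Matrix
open scoped Kronecker

/-- The `m`-fold tensor power `U^{⊗m}` of a `d × d` matrix. -/
def tpow {d : ℕ} (m : ℕ) (U : Matrix (Fin d) (Fin d) ℂ) :
    Matrix (Fin m → Fin d) (Fin m → Fin d) ℂ :=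
  Matrix.of fun x y => ∏ k, U (x k) (y k)

/-- The operator `A_n = (1/√((d-n)! n!)) ∑_{π ∈ S_d} sgn(π)
|e_{π(n+1)},…,e_{π(d)}⟩⟨e_{π(1)},…,e_{π(n)}|`. -/
noncomputable def matA (d n : ℕ) (hn : n ≤ d) :
    Matrix (Fin (d - n) → Fin d) (Fin n → Fin d) ℂ :=
  Matrix.of fun y x => ((Real.sqrt ((d - n).factorial * n.factorial) : ℂ))⁻¹ *
    ∑ π : Equiv.Perm (Fin d), ((Equiv.Perm.sign π : ℤ) : ℂ) *
      (if (∀ k : Fin (d - n), y k = π ⟨n + (k : ℕ), by have := k.isLt; omega⟩) ∧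
          (∀ k : Fin n, x k = π (Fin.castLE hn k)) then 1 else 0)

/-- `n` copies of the unnormalized maximally entangled vector, `|Φ⟩^{⊗n} = ∑_x |x⟩⊗|x⟩` with
`x` ranging over multi-indices `Fin n → Fin d`. -/
def PhiN (d n : ℕ) : (Fin n → Fin d) × (Fin n → Fin d) → ℂ :=
  fun p => if p.1 = p.2 then 1 else 0

/-- The Choi operator `(id ⊗ Ad_{A_n})(|Φ⟩⟨Φ|^{⊗n}) = (1 ⊗ A_n)|Φ⟩⟨Φ|^{⊗n}(1 ⊗ A_n)†`. -/
noncomputable def choiA (d n : ℕ) (hn : n ≤ d) :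
    Matrix ((Fin n → Fin d) × (Fin (d - n) → Fin d))
      ((Fin n → Fin d) × (Fin (d - n) → Fin d)) ℂ :=
  ((1 : Matrix (Fin n → Fin d) (Fin n → Fin d) ℂ) ⊗ₖ matA d n hn) *
    Matrix.of (fun p q => PhiN d n p * (starRingEnd ℂ) (PhiN d n q)) *
    ((1 : Matrix (Fin n → Fin d) (Fin n → Fin d) ℂ) ⊗ₖ matA d n hn)ᴴ

/-- The totally antisymmetric vector `|∧_{1,…,d}⟩ = (1/√d!) ∑_{σ∈S_d} sgn(σ)|e_{σ(1)},…,e_{σ(d)}⟩`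
of `H^{⊗d}`, written on the index set `(Fin n → Fin d) × (Fin (d-n) → Fin d)` identifying
`H^{⊗d} ≅ H^{⊗n} ⊗ H^{⊗(d-n)}`. -/
noncomputable def wedgeFull (d n : ℕ) (hn : n ≤ d) :
    (Fin n → Fin d) × (Fin (d - n) → Fin d) → ℂ :=
  fun p => ((Real.sqrt d.factorial : ℂ))⁻¹ *
    ∑ σ : Equiv.Perm (Fin d), ((Equiv.Perm.sign σ : ℤ) : ℂ) *
      (if (∀ k : Fin n, p.1 k = σ (Fin.castLE hn k)) ∧
          (∀ k : Fin (d - n), p.2 k = σ ⟨n + (k : ℕ), by have := k.isLt; omega⟩)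
        then 1 else 0)


def splice (d n : ℕ) (hn : n ≤ d) (a : Fin n → Fin d) (b : Fin (d - n) → Fin d) :
    Fin d → Fin d :=
  fun i => if h : (i : ℕ) < n then a ⟨i, h⟩ else b ⟨(i : ℕ) - n, by have := i.isLt; omega⟩

noncomputable def sgnInd (d : ℕ) (f : Fin d → Fin d) : ℂ :=
  ∑ σ : Equiv.Perm (Fin d), ((Equiv.Perm.sign σ : ℤ) : ℂ) * (if f = ⇑σ then 1 else 0)

lemma splice_cond (d n : ℕ) (hn : n ≤ d) (σ : Equiv.Perm (Fin d))
    (a : Fin n → Fin d) (b : Fin (d - n) → Fin d) :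
    ((∀ k : Fin n, a k = σ (Fin.castLE hn k)) ∧
      (∀ k : Fin (d - n), b k = σ ⟨n + (k : ℕ), by have := k.isLt; omega⟩)) ↔
    splice d n hn a b = ⇑σ := by
  constructor
  · rintro ⟨h1, h2⟩
    funext i
    unfold splice
    split
    · next h =>
      rw [h1 ⟨i, h⟩]
      rfl
    · next h =>
      rw [h2 ⟨(i : ℕ) - n, by have := i.isLt; omega⟩]
      congr 1
      exact Fin.ext (by simp; omega)
  · intro h
    constructor
    · intro k
      have := congrFun h (Fin.castLE hn k)
      unfold splice at this
      simpa using this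
    · intro k
      have := congrFun h ⟨n + (k : ℕ), by have := k.isLt; omega⟩
      unfold splice at this
      simp only [Fin.isValue] at this
      rw [dif_neg (by simp)] at this
      simpa using this

lemma wedge_eq (d n : ℕ) (hn : n ≤ d) (p : (Fin n → Fin d) × (Fin (d - n) → Fin d)) :
    wedgeFull d n hn p =
      ((Real.sqrt d.factorial : ℂ))⁻¹ * sgnInd d (splice d n hn p.1 p.2) := by
  unfold wedgeFull sgnInd
  congr 1
  apply Finset.sum_congr rfl
  intro σ _
  congr 1
  rw [if_congr (splice_cond d n hn σ p.1 p.2) rfl rfl]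

lemma matA_eq (d n : ℕ) (hn : n ≤ d) (y : Fin (d - n) → Fin d) (x : Fin n → Fin d) :
    matA d n hn y x =
      ((Real.sqrt ((d - n).factorial * n.factorial) : ℂ))⁻¹ * sgnInd d (splice d n hn x y) := by
  unfold matA sgnInd
  simp only [Matrix.of_apply]
  congr 1
  apply Finset.sum_congr rfl
  intro σ _
  congr 1
  rw [if_congr (Iff.trans and_comm (splice_cond d n hn σ x y)) rfl rfl]

lemma sgnInd_conj (d : ℕ) (f : Fin d → Fin d) :
    (starRingEnd ℂ) (sgnInd d f) = sgnInd d f := by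
  unfold sgnInd
  rw [map_sum]
  apply Finset.sum_congr rfl
  intro σ _
  rw [_root_.map_mul]
  congr 1
  · simp
  · split <;> simp

def finE (d n : ℕ) (hn : n ≤ d) : Fin n ⊕ Fin (d - n) ≃ Fin d :=
  finSumFinEquiv.trans (finCongr (by omega))

lemma finE_inl (d n : ℕ) (hn : n ≤ d) (k : Fin n) :
    finE d n hn (Sum.inl k) = Fin.castLE hn k :=
  Fin.ext (by simp [finE])

lemma finE_inr (d n : ℕ) (hn : n ≤ d) (k : Fin (d - n)) :
    finE d n hn (Sum.inr k) = ⟨n + (k : ℕ), by have := k.isLt; omega⟩ :=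
  Fin.ext (by simp [finE])

lemma prod_split (d n : ℕ) (hn : n ≤ d) (G : Fin d → ℂ) :
    (∏ k : Fin n, G (Fin.castLE hn k)) *
      ∏ k : Fin (d - n), G ⟨n + (k : ℕ), by have := k.isLt; omega⟩ = ∏ i, G i := by
  rw [← Equiv.prod_comp (finE d n hn) G, Fintype.prod_sum_type]
  congr 1

noncomputable def pairEquiv (d n : ℕ) (hn : n ≤ d) :
    ((Fin n → Fin d) × (Fin (d - n) → Fin d)) ≃ (Fin d → Fin d) where
  toFun p := splice d n hn p.1 p.2
  invFun f := (fun k => f (Fin.castLE hn k), fun k => f ⟨n + (k : ℕ), by have := k.isLt; omega⟩)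
  left_inv p := by
    refine Prod.ext ?_ ?_
    · funext k
      simp only [splice]
      rw [dif_pos (by simpa using k.isLt)]
      rfl
    · funext k
      simp only [splice]
      rw [dif_neg (by simp)]
      congr 1
      exact Fin.ext (by simp)
  right_inv f := by
    funext i
    simp only [splice]
    split
    · rfl
    · next h => congr 1; exact Fin.ext (by simp; omega)


lemma splice_lo (d n : ℕ) (hn : n ≤ d) (a : Fin n → Fin d) (b : Fin (d - n) → Fin d)
    (k : Fin n) : splice d n hn a b (Fin.castLE hn k) = a k := by
  simp only [splice]
  rw [dif_pos (by simpa using k.isLt)]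
  rfl

lemma splice_hi (d n : ℕ) (hn : n ≤ d) (a : Fin n → Fin d) (b : Fin (d - n) → Fin d)
    (k : Fin (d - n)) :
    splice d n hn a b ⟨n + (k : ℕ), by have := k.isLt; omega⟩ = b k := by
  simp only [splice]
  rw [dif_neg (by simp)]
  congr 1
  exact Fin.ext (by simp)

lemma det_row (d : ℕ) (M : Matrix (Fin d) (Fin d) ℂ) :
    ∑ σ : Equiv.Perm (Fin d), ((Equiv.Perm.sign σ : ℤ) : ℂ) * ∏ i, M i (σ i) = M.det := by
  rw [← Matrix.det_transpose, Matrix.det_apply']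
  rfl

lemma det_sub (d : ℕ) (U : Matrix (Fin d) (Fin d) ℂ) (f : Fin d → Fin d) :
    (U.submatrix f id).det = U.det * sgnInd d f := by
  classical
  by_cases hf : Function.Injective f
  · have hb : Function.Bijective f := Finite.injective_iff_bijective.mp hf
    have hfe : f = ⇑(Equiv.ofBijective f hb) := rfl
    set τ := Equiv.ofBijective f hb
    rw [hfe, Matrix.det_permute]
    unfold sgnInd
    rw [Finset.sum_eq_single τ]
    · rw [if_pos rfl, mul_one]
      ring
    · intro σ _ hστ
      rw [if_neg, mul_zero]
      intro hc
      exact hστ (Equiv.coe_fn_injective (hfe.symm.trans hc)).symm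
    · intro h
      exact absurd (Finset.mem_univ τ) h
  · rw [Function.not_injective_iff] at hf
    obtain ⟨i, j, hij, hne⟩ := hf
    have hz : (U.submatrix f id).det = 0 :=
      Matrix.det_zero_of_row_eq hne (by funext k; simp [Matrix.submatrix_apply, hij])
    have hz2 : sgnInd d f = 0 := by
      unfold sgnInd
      apply Finset.sum_eq_zero
      intro σ _
      rw [if_neg, mul_zero]
      intro hc
      exact hne (σ.injective (by rw [← hc]; exact hij))
    rw [hz, hz2, mul_zero]

lemma choiA_apply (d n : ℕ) (hn : n ≤ d)
    (p q : (Fin n → Fin d) × (Fin (d - n) → Fin d)) :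
    choiA d n hn p q = matA d n hn p.2 p.1 * (starRingEnd ℂ) (matA d n hn q.2 q.1) := by
  classical
  simp [choiA, Matrix.mul_apply, Matrix.kroneckerMap_apply, Matrix.one_apply, PhiN,
    Matrix.conjTranspose_apply, Fintype.sum_prod_type, apply_ite,
    ite_mul, mul_ite, Finset.sum_ite_eq, Finset.sum_ite_eq', Complex.star_def]

lemma Uact (d n : ℕ) (hn : n ≤ d) (U : Matrix (Fin d) (Fin d) ℂ)
    (p : (Fin n → Fin d) × (Fin (d - n) → Fin d)) :
    ∑ r, (tpow n U ⊗ₖ tpow (d - n) U) p r * wedgeFull d n hn r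
      = U.det * wedgeFull d n hn p := by
  classical
  set P := splice d n hn p.1 p.2 with hP
  set cW : ℂ := ((Real.sqrt d.factorial : ℂ))⁻¹ with hcW
  calc ∑ r, (tpow n U ⊗ₖ tpow (d - n) U) p r * wedgeFull d n hn r
      = ∑ f : Fin d → Fin d, (∏ i, U (P i) (f i)) * (cW * sgnInd d f) := by
        rw [← Equiv.sum_comp (pairEquiv d n hn).symm]
        apply Finset.sum_congr rfl
        intro f _
        congr 1
        · show (tpow n U ⊗ₖ tpow (d - n) U) p
            (fun k => f (Fin.castLE hn k), fun k => f ⟨n + (k : ℕ), by have := k.isLt; omega⟩)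
            = ∏ i, U (P i) (f i)
          rw [Matrix.kroneckerMap_apply]
          show (∏ k : Fin n, U (p.1 k) (f (Fin.castLE hn k))) *
              (∏ k : Fin (d - n), U (p.2 k) (f ⟨n + (k : ℕ), by have := k.isLt; omega⟩))
              = ∏ i, U (P i) (f i)
          rw [← prod_split d n hn (fun i => U (P i) (f i))]
          congr 1
          · exact Finset.prod_congr rfl fun k _ => by rw [hP, splice_lo]
          · exact Finset.prod_congr rfl fun k _ => by rw [hP, splice_hi]
        · rw [wedge_eq]
          congr 1
          exact congrArg (sgnInd d) ((pairEquiv d n hn).apply_symm_apply f)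
    _ = cW * ∑ σ : Equiv.Perm (Fin d),
          ((Equiv.Perm.sign σ : ℤ) : ℂ) * ∏ i, U (P i) (σ i) := by
        unfold sgnInd
        rw [Finset.mul_sum]
        have step : ∀ f : Fin d → Fin d,
            (∏ i, U (P i) (f i)) * (cW * ∑ σ : Equiv.Perm (Fin d),
              ((Equiv.Perm.sign σ : ℤ) : ℂ) * (if f = ⇑σ then 1 else 0))
            = ∑ σ : Equiv.Perm (Fin d),
              (if f = ⇑σ then cW * (((Equiv.Perm.sign σ : ℤ) : ℂ) * ∏ i, U (P i) (f i))
                else 0) := by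
          intro f
          rw [Finset.mul_sum, Finset.mul_sum]
          apply Finset.sum_congr rfl
          intro σ _
          split <;> ring
        simp only [step]
        rw [Finset.sum_comm]
        apply Finset.sum_congr rfl
        intro σ _
        have : ∀ f : Fin d → Fin d,
            (if f = ⇑σ then cW * (((Equiv.Perm.sign σ : ℤ) : ℂ) * ∏ i, U (P i) (f i)) else 0)
            = (if f = ⇑σ then cW * (((Equiv.Perm.sign σ : ℤ) : ℂ) * ∏ i, U (P i) (σ i))
                else 0) := by
          intro f
          split
          · next h => rw [h]
          · rfl
        simp only [this]
        rw [Finset.sum_ite_eq' Finset.univ (⇑σ)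
          (fun _ => cW * (((Equiv.Perm.sign σ : ℤ) : ℂ) * ∏ i, U (P i) (σ i)))]
        simp [mul_assoc]
    _ = cW * (U.submatrix P id).det := by
        rw [← det_row]
        rfl
    _ = U.det * wedgeFull d n hn p := by
        rw [det_sub, wedge_eq, ← hP, ← hcW]
        ring

/-- The Choi operator of `X ↦ A_n X A_n†` equals `d!/(n!(d-n)!)` times the
rank-one projector onto `|∧_{1,…,d}⟩`; in particular it is invariant under conjugation by
`U^{⊗d}` for every unitary `U` on `ℂ^d`. -/
theorem stmt9 (d n : ℕ) (h0 : 0 < n) (hnd : n < d) (hn : n ≤ d) :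
    choiA d n hn = ((d.factorial : ℂ) / ((n.factorial : ℂ) * ((d - n).factorial : ℂ))) •
        Matrix.of (fun p q => wedgeFull d n hn p * (starRingEnd ℂ) (wedgeFull d n hn q)) ∧
    ∀ U ∈ Matrix.unitaryGroup (Fin d) ℂ,
      (tpow n U ⊗ₖ tpow (d - n) U) * choiA d n hn * (tpow n U ⊗ₖ tpow (d - n) U)ᴴ =
        choiA d n hn := by
  classical
  have hfac : ∀ m : ℕ, ((m.factorial : ℂ)) ≠ 0 :=
    fun m => Nat.cast_ne_zero.mpr (Nat.factorial_ne_zero m)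
  have h1 : ((Real.sqrt ((d - n).factorial * n.factorial) : ℝ) : ℂ) *
      ((Real.sqrt ((d - n).factorial * n.factorial) : ℝ) : ℂ) =
      ((d - n).factorial : ℂ) * (n.factorial : ℂ) := by
    rw [← Complex.ofReal_mul, Real.mul_self_sqrt (by positivity)]
    push_cast
    ring
  have h2 : ((Real.sqrt d.factorial : ℝ) : ℂ) * ((Real.sqrt d.factorial : ℝ) : ℂ) =
      (d.factorial : ℂ) := by
    rw [← Complex.ofReal_mul, Real.mul_self_sqrt (by positivity)]
    push_cast
    ring
  have key : ((Real.sqrt ((d - n).factorial * n.factorial) : ℂ))⁻¹ *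
      ((Real.sqrt ((d - n).factorial * n.factorial) : ℂ))⁻¹ =
      ((d.factorial : ℂ) / ((n.factorial : ℂ) * ((d - n).factorial : ℂ))) *
        (((Real.sqrt d.factorial : ℂ))⁻¹ * ((Real.sqrt d.factorial : ℂ))⁻¹) := by
    rw [← mul_inv, h1, ← mul_inv, h2]
    field_simp
    rw [div_eq_div_iff (mul_ne_zero (hfac _) (hfac _))
      (mul_ne_zero (mul_ne_zero (hfac _) (hfac _)) (hfac _))]
    ring
  have key1 : choiA d n hn =
      ((d.factorial : ℂ) / ((n.factorial : ℂ) * ((d - n).factorial : ℂ))) •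
        Matrix.of (fun p q => wedgeFull d n hn p * (starRingEnd ℂ) (wedgeFull d n hn q)) := by
    ext p q
    rw [choiA_apply, matA_eq, matA_eq, Matrix.smul_apply, Matrix.of_apply, smul_eq_mul,
      wedge_eq, wedge_eq, _root_.map_mul, map_inv₀, Complex.conj_ofReal, sgnInd_conj,
      _root_.map_mul, map_inv₀, Complex.conj_ofReal, sgnInd_conj]
    linear_combination (sgnInd d (splice d n hn p.1 p.2) * sgnInd d (splice d n hn q.1 q.2)) * key
  refine ⟨key1, ?_⟩
  intro U hU
  have hdet : (starRingEnd ℂ) U.det * U.det = 1 :=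
    Unitary.star_mul_self_of_mem (Matrix.det_of_mem_unitary hU)
  rw [key1]
  ext p q
  simp only [Matrix.mul_apply, Matrix.smul_apply, Matrix.of_apply, Matrix.conjTranspose_apply,
    smul_eq_mul]
  set D : ℂ := ((d.factorial : ℂ) / ((n.factorial : ℂ) * ((d - n).factorial : ℂ))) with hD
  set T := tpow n U ⊗ₖ tpow (d - n) U with hT
  set w := wedgeFull d n hn with hw
  have inner : ∀ j, (∑ i, T p i * (D * (w i * (starRingEnd ℂ) (w j))))
      = D * (starRingEnd ℂ) (w j) * (U.det * w p) := by
    intro j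
    rw [show (∑ i, T p i * (D * (w i * (starRingEnd ℂ) (w j))))
        = (D * (starRingEnd ℂ) (w j)) * ∑ i, T p i * w i from by
      rw [Finset.mul_sum]; exact Finset.sum_congr rfl fun i _ => by ring]
    rw [hw, Uact]
  simp only [inner]
  have hsum : ∑ j, (D * (starRingEnd ℂ) (w j) * (U.det * w p)) * star (T q j)
      = (D * (U.det * w p)) * (starRingEnd ℂ) (∑ j, T q j * w j) := by
    rw [map_sum, Finset.mul_sum]
    apply Finset.sum_congr rfl
    intro j _
    rw [_root_.map_mul]
    simp only [Complex.star_def]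
    ring
  rw [hsum, hw, Uact, _root_.map_mul]
  linear_combination D * w p * (starRingEnd ℂ) (w q) * hdet
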